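/- Let Ω ⊆ ℝⁿ be open and let N : Ω → ℝⁿ be continuously differentiable with ‖N(y)‖ = 1 and ∂_j N_k(y) = ∂_k N_j(y) for all y ∈ Ω and all j, k. Let x ∈ Ω and t ∈ ℝ be such that the segment {x + s N(x) : s between 0 and t} is contained in Ω. Then N(x + t N(x)) = N(x). -/

import Mathlib

/-!
Differentiating `‖N‖² = 1` shows that `DN(y)` maps into `N(y)ᗮ`; since `DN(y)` is symmetric,
`DN(y) N(y) = 0`. Along `γ(σ) = x + σ t N(x)` the defect `φ = N ∘ γ - N(x)` therefore satisfies
`φ' = t DN(γ) N(x) = -t DN(γ) φ`, so `‖φ'‖ ≤ C ‖φ‖` on `[0, 1]`, and Grönwall with `φ(0) = 0`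
gives `φ(1) = 0`.
-/

/-- The `k`-th partial derivative of a scalar function on `ℝⁿ`. -/
noncomputable def pder {n : ℕ} (f : EuclideanSpace ℝ (Fin n) → ℝ) (k : Fin n)
    (x : EuclideanSpace ℝ (Fin n)) : ℝ :=
  fderiv ℝ f x (EuclideanSpace.single k 1)

open Set Filter Topology RealInnerProductSpace

section UnitField

variable {E F : Type*} [NormedAddCommGroup E] [NormedSpace ℝ E]
  [NormedAddCommGroup F] [InnerProductSpace ℝ F]

theorem inner_fderiv_apply_self_eq_zero {N : E → F} {y : E} (hd : DifferentiableAt ℝ N y)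
    (hunit : ∀ᶠ z in 𝓝 y, ‖N z‖ = 1) (v : E) : ⟪fderiv ℝ N y v, N y⟫ = 0 := by
  have hconst : (fun z => ⟪N z, N z⟫) =ᶠ[𝓝 y] fun _ => (1 : ℝ) := by
    filter_upwards [hunit] with z hz
    rw [real_inner_self_eq_norm_sq, hz, one_pow]
  have h := fderiv_inner_apply ℝ hd hd v
  rw [hconst.fderiv_eq, fderiv_const_apply, zero_apply] at h
  linarith [real_inner_comm (N y) (fderiv ℝ N y v)]

theorem fderiv_apply_self_eq_zero_of_isSymmetric {N : F → F} {y : F}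
    (hd : DifferentiableAt ℝ N y) (hunit : ∀ᶠ z in 𝓝 y, ‖N z‖ = 1)
    (hsym : (fderiv ℝ N y : F →ₗ[ℝ] F).IsSymmetric) : fderiv ℝ N y (N y) = 0 :=
  ext_inner_right ℝ fun w => by
    rw [inner_zero_left, ← ContinuousLinearMap.coe_coe, hsym, real_inner_comm]
    exact inner_fderiv_apply_self_eq_zero hd hunit w

end UnitField

theorem pder_apply_eq_fderiv_apply {n : ℕ}
    {N : EuclideanSpace ℝ (Fin n) → EuclideanSpace ℝ (Fin n)}
    {y : EuclideanSpace ℝ (Fin n)} (hd : DifferentiableAt ℝ N y) (j k : Fin n) :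
    pder (fun z => N z j) k y = fderiv ℝ N y (EuclideanSpace.single k 1) j := by
  have h := ((EuclideanSpace.proj j : EuclideanSpace ℝ (Fin n) →L[ℝ] ℝ).hasFDerivAt.comp y
    hd.hasFDerivAt).fderiv
  exact congrArg (· (EuclideanSpace.single k 1)) h

theorem isSymmetric_fderiv_of_pder_comm {n : ℕ}
    {N : EuclideanSpace ℝ (Fin n) → EuclideanSpace ℝ (Fin n)}
    {y : EuclideanSpace ℝ (Fin n)} (hd : DifferentiableAt ℝ N y)
    (hsym : ∀ j k : Fin n, pder (fun z => N z j) k y = pder (fun z => N z k) j y) :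
    (fderiv ℝ N y : EuclideanSpace ℝ (Fin n) →ₗ[ℝ] EuclideanSpace ℝ (Fin n)).IsSymmetric := by
  rw [← LinearMap.isHermitian_toMatrix_iff (EuclideanSpace.basisFun (Fin n) ℝ)]
  refine Matrix.IsHermitian.ext fun i j => ?_
  simpa [LinearMap.toMatrix_apply, ← pder_apply_eq_fderiv_apply hd] using hsym j i

theorem mul_mem_uIcc_zero {σ : ℝ} (hσ : σ ∈ Icc (0 : ℝ) 1) (t : ℝ) : σ * t ∈ uIcc 0 t := by
  rw [← segment_eq_uIcc]
  exact ⟨1 - σ, σ, sub_nonneg.2 hσ.2, hσ.1, by ring, by simp⟩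

section Segment

variable {E : Type*} [NormedAddCommGroup E] [NormedSpace ℝ E]

theorem apply_add_smul_self_eq_of_fderiv_apply_self_eq_zero {Ω : Set E} (hΩ : IsOpen Ω)
    {N : E → E} (hN : ContDiffOn ℝ 1 N Ω) (hDN : ∀ y ∈ Ω, fderiv ℝ N y (N y) = 0)
    {x : E} {t : ℝ} (hseg : ∀ s ∈ uIcc 0 t, x + s • N x ∈ Ω) : N (x + t • N x) = N x := by
  set γ : ℝ → E := fun σ => x + (σ * t) • N x
  have hγΩ : MapsTo γ (Icc 0 1) Ω := fun σ hσ => hseg _ (mul_mem_uIcc_zero hσ t)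
  have hderiv : ∀ σ ∈ Icc (0 : ℝ) 1,
      HasDerivAt (fun σ => N (γ σ) - N x) (t • fderiv ℝ N (γ σ) (N x)) σ := fun σ hσ => by
    have hγ : HasDerivAt γ (t • N x) σ := by
      refine HasDerivAt.const_add x ?_
      simpa using ((hasDerivAt_id σ).mul_const t).smul_const (N x)
    have hNγ := ((hN.differentiableOn one_ne_zero).differentiableAt
      (hΩ.mem_nhds (hγΩ hσ))).hasFDerivAt
    simpa using (hNγ.comp_hasDerivAt σ hγ).sub_const (N x)
  obtain ⟨C, hC⟩ : ∃ C, ∀ σ ∈ Icc (0 : ℝ) 1, ‖fderiv ℝ N (γ σ)‖ ≤ C :=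
    isCompact_Icc.exists_bound_of_continuousOn
      ((hN.continuousOn_fderiv_of_isOpen hΩ le_rfl).comp (by fun_prop) hγΩ)
  have hbound : ∀ σ ∈ Ico (0 : ℝ) 1,
      ‖t • fderiv ℝ N (γ σ) (N x)‖ ≤ |t| * C * ‖N (γ σ) - N x‖ := fun σ hσ => by
    have hσ' := Ico_subset_Icc_self hσ
    have hkill : fderiv ℝ N (γ σ) (N x) = -fderiv ℝ N (γ σ) (N (γ σ) - N x) := by
      rw [map_sub, hDN _ (hγΩ hσ'), zero_sub, neg_neg]
    rw [hkill, norm_smul, norm_neg, Real.norm_eq_abs, mul_assoc]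
    gcongr
    exact (ContinuousLinearMap.le_opNorm _ _).trans (by gcongr; exact hC σ hσ')
  have h1 := eq_zero_of_abs_deriv_le_mul_abs_self_of_eq_zero_right
    (fun σ hσ => (hderiv σ hσ).continuousAt.continuousWithinAt)
    (fun σ hσ => (hderiv σ (Ico_subset_Icc_self hσ)).hasDerivWithinAt) (by simp [γ]) hbound
    1 (right_mem_Icc.2 zero_le_one)
  simpa [γ, sub_eq_zero] using h1

end Segment

/-- A proper extension (a `C¹` unit vector field with symmetric Jacobian on an open set
`Ω`) is constant along its normal segments: if the segment from `x` to `x + t N(x)`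
lies in `Ω`, then `N(x + t N(x)) = N(x)`. -/
theorem proper_extension_constant_along_normal_segment {n : ℕ}
    (Ω : Set (EuclideanSpace ℝ (Fin n))) (hΩ : IsOpen Ω)
    (N : EuclideanSpace ℝ (Fin n) → EuclideanSpace ℝ (Fin n))
    (hN : ContDiffOn ℝ 1 N Ω)
    (hunit : ∀ y ∈ Ω, ‖N y‖ = 1)
    (hsym : ∀ y ∈ Ω, ∀ j k : Fin n,
      pder (fun z => N z j) k y = pder (fun z => N z k) j y)
    (x : EuclideanSpace ℝ (Fin n)) (t : ℝ)
    (hseg : ∀ s ∈ Set.uIcc (0 : ℝ) t, x + s • N x ∈ Ω) :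
    N (x + t • N x) = N x := by
  have hd : ∀ y ∈ Ω, DifferentiableAt ℝ N y := fun y hy =>
    (hN.differentiableOn one_ne_zero y hy).differentiableAt (hΩ.mem_nhds hy)
  refine apply_add_smul_self_eq_of_fderiv_apply_self_eq_zero hΩ hN (fun y hy => ?_) hseg
  exact fderiv_apply_self_eq_zero_of_isSymmetric (hd y hy)
    (eventually_of_mem (hΩ.mem_nhds hy) hunit)
    (isSymmetric_fderiv_of_pder_comm (hd y hy) (hsym y hy))
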